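/- If the bipartite graph associated to the joint pmf of (X,Y) (edge between x and y iff p(x,y)>0) is connected, then every random variable Q with I(Q;Y|X)=I(Q;X|Y)=0 satisfies I(X,Y;Q)=0 and I(X;Y|Q)=I(X;Y). -/

import Mathlib

open Finset

open Classical in
/-- Probability that random variable `X` (on finite weighted space `p`) equals `a`. -/
noncomputable def prob {Ω α : Type*} [Fintype Ω] (p : Ω → ℝ) (X : Ω → α) (a : α) : ℝ :=
  ∑ ω, if X ω = a then p ω else 0

/-- Shannon entropy of a random variable. -/
noncomputable def ent {Ω α : Type*} [Fintype Ω] [Fintype α] (p : Ω → ℝ) (X : Ω → α) : ℝ :=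
  ∑ a, Real.negMulLog (prob p X a)

/-- Conditional entropy H(X|Y). -/
noncomputable def condEnt {Ω α β : Type*} [Fintype Ω] [Fintype α] [Fintype β]
    (p : Ω → ℝ) (X : Ω → α) (Y : Ω → β) : ℝ :=
  ent p (fun ω => (X ω, Y ω)) - ent p Y

/-- Mutual information I(X;Y). -/
noncomputable def mi {Ω α β : Type*} [Fintype Ω] [Fintype α] [Fintype β]
    (p : Ω → ℝ) (X : Ω → α) (Y : Ω → β) : ℝ :=
  ent p X + ent p Y - ent p (fun ω => (X ω, Y ω))

/-- Conditional mutual information I(X;Y|Z). -/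
noncomputable def cmi {Ω α β γ : Type*} [Fintype Ω] [Fintype α] [Fintype β] [Fintype γ]
    (p : Ω → ℝ) (X : Ω → α) (Y : Ω → β) (Z : Ω → γ) : ℝ :=
  ent p (fun ω => (X ω, Z ω)) + ent p (fun ω => (Y ω, Z ω))
    - ent p (fun ω => ((X ω, Y ω), Z ω)) - ent p Z

/-- `p` is a probability mass function. -/
def IsPMF {Ω : Type*} [Fintype Ω] (p : Ω → ℝ) : Prop :=
  (∀ ω, 0 ≤ p ω) ∧ ∑ ω, p ω = 1

/-- Bipartite graph on 𝒳 ⊔ 𝒴 with an edge between x and y iff the joint pmf μ(x,y) > 0. -/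
def edge {α β : Type*} (μ : α × β → ℝ) : α ⊕ β → α ⊕ β → Prop
  | Sum.inl x, Sum.inr y => 0 < μ (x, y)
  | Sum.inr y, Sum.inl x => 0 < μ (x, y)
  | _, _ => False

open Real

section probLemmas
variable {Ω α β : Type*} [Fintype Ω] (p : Ω → ℝ)

lemma prob_nonneg (hp : ∀ ω, 0 ≤ p ω) (X : Ω → α) (a : α) : 0 ≤ prob p X a := by
  classical
  apply Finset.sum_nonneg; intro ω _; split <;> simp [hp ω]

lemma prob_congr {X : Ω → α} {Y : Ω → β} {a : α} {b : β}
    (h : ∀ ω, X ω = a ↔ Y ω = b) : prob p X a = prob p Y b := by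
  classical
  unfold prob; apply Finset.sum_congr rfl; intro ω _
  simp only [h ω]

lemma sum_prob [Fintype α] (hp : ∑ ω, p ω = 1) (X : Ω → α) : ∑ a, prob p X a = 1 := by
  classical
  unfold prob; rw [Finset.sum_comm]
  rw [← hp]; apply Finset.sum_congr rfl; intro ω _
  simp

lemma prob_fst [Fintype β] (X : Ω → α) (Y : Ω → β) (a : α) :
    prob p X a = ∑ b, prob p (fun ω => (X ω, Y ω)) (a, b) := by
  classical
  unfold prob; rw [Finset.sum_comm]
  apply Finset.sum_congr rfl; intro ω _
  by_cases h : X ω = a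
  · simp [h, Prod.ext_iff]
  · simp [h, Prod.ext_iff]

lemma prob_snd [Fintype α] (X : Ω → α) (Y : Ω → β) (b : β) :
    prob p Y b = ∑ a, prob p (fun ω => (X ω, Y ω)) (a, b) := by
  classical
  unfold prob; rw [Finset.sum_comm]
  apply Finset.sum_congr rfl; intro ω _
  by_cases h : Y ω = b
  · simp [h, Prod.ext_iff]
  · simp [h, Prod.ext_iff]

end probLemmas

/-- Gibbs: KL divergence zero implies equal distributions. -/
lemma KL_zero {ι : Type*} [Fintype ι] (μ ν : ι → ℝ)
    (hμ0 : ∀ i, 0 ≤ μ i) (hν0 : ∀ i, 0 ≤ ν i)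
    (hμ1 : ∑ i, μ i = 1) (hν1 : ∑ i, ν i = 1)
    (habs : ∀ i, ν i = 0 → μ i = 0)
    (hKL : ∑ i, (μ i * Real.log (μ i) - μ i * Real.log (ν i)) = 0) :
    ∀ i, μ i = ν i := by
  classical
  set f : ℝ → ℝ := fun x => x * Real.log x with hf
  set q : ι → ℝ := fun i => μ i / ν i with hq
  have hmem : ∀ i ∈ Finset.univ (α := ι), q i ∈ Set.Ici (0:ℝ) := by
    intro i _; exact div_nonneg (hμ0 i) (hν0 i)
  have hsum : ∑ i, ν i • q i = 1 := by
    rw [← hμ1]; apply Finset.sum_congr rfl; intro i _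
    by_cases h : ν i = 0
    · simp [hq, h, habs i h]
    · simp only [hq, smul_eq_mul]; field_simp
  have hkey : f (∑ i, ν i • q i) = ∑ i, ν i • f (q i) := by
    rw [hsum]
    have : ∑ i, ν i • f (q i) = ∑ i, (μ i * Real.log (μ i) - μ i * Real.log (ν i)) := by
      apply Finset.sum_congr rfl; intro i _
      by_cases h : ν i = 0
      · simp [hq, h, habs i h, hf]
      by_cases h2 : μ i = 0
      · simp [hq, h2, hf]
      have hν : 0 < ν i := lt_of_le_of_ne (hν0 i) (Ne.symm h)
      have hμ : 0 < μ i := lt_of_le_of_ne (hμ0 i) (Ne.symm h2)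
      rw [hf, hq]
      simp only [smul_eq_mul]
      rw [Real.log_div (ne_of_gt hμ) (ne_of_gt hν)]
      field_simp
    rw [this, hKL, hf]; simp
  have := (Real.strictConvexOn_mul_log.map_sum_eq_iff'
    (fun i _ => hν0 i) (by simpa using hν1) hmem).mp (by exact hkey)
  intro i
  by_cases h : ν i = 0
  · rw [habs i h, h]
  · have := this i (Finset.mem_univ i) h
    rw [hsum] at this
    have hν : 0 < ν i := lt_of_le_of_ne (hν0 i) (Ne.symm h)
    field_simp [hq] at this
    simp only [hq] at this; rw [div_eq_one_iff_eq h] at this; exact this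

section sums
variable {A B C M : Type*} [Fintype A] [Fintype B] [Fintype C] [AddCommMonoid M]

lemma sum3_eq (F : A → B → C → M) :
    ∑ i : A × B × C, F i.1 i.2.1 i.2.2 = ∑ a, ∑ b, ∑ c, F a b c := by
  rw [Fintype.sum_prod_type]
  exact Finset.sum_congr rfl fun a _ => Fintype.sum_prod_type _

lemma sum_swap23 (F : A → B → C → M) :
    ∑ a, ∑ b, ∑ c, F a b c = ∑ a, ∑ c, ∑ b, F a b c :=
  Finset.sum_congr rfl fun a _ => Finset.sum_comm

lemma sum_rot (F : A → B → C → M) :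
    ∑ a, ∑ b, ∑ c, F a b c = ∑ c, ∑ a, ∑ b, F a b c := by
  rw [sum_swap23]; exact Finset.sum_comm

end sums

/-- If the CMI-type expression vanishes, we get conditional independence. -/
lemma ci_of_cmi_zero {A B C : Type*} [Fintype A] [Fintype B] [Fintype C]
    (m : A → B → C → ℝ) (h0 : ∀ a b c, 0 ≤ m a b c)
    (h1 : ∑ c, ∑ a, ∑ b, m a b c = 1)
    (hC : ∀ c, 0 < ∑ a, ∑ b, m a b c)
    (hcmi : (∑ a, ∑ c, Real.negMulLog (∑ b, m a b c))
          + (∑ b, ∑ c, Real.negMulLog (∑ a, m a b c))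
          - (∑ a, ∑ b, ∑ c, Real.negMulLog (m a b c))
          - (∑ c, Real.negMulLog (∑ a, ∑ b, m a b c)) = 0) :
    ∀ a b c, m a b c * (∑ a', ∑ b', m a' b' c) = (∑ b', m a b' c) * (∑ a', m a' b c) := by
  classical
  set mA : A → C → ℝ := fun a c => ∑ b, m a b c with hmA
  set mB : B → C → ℝ := fun b c => ∑ a, m a b c with hmB
  set mC : C → ℝ := fun c => ∑ a, ∑ b, m a b c with hmC
  have hmA0 : ∀ a c, 0 ≤ mA a c := fun a c => Finset.sum_nonneg fun b _ => h0 a b c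
  have hmB0 : ∀ b c, 0 ≤ mB b c := fun b c => Finset.sum_nonneg fun a _ => h0 a b c
  have hle_mA : ∀ a b c, m a b c ≤ mA a c := fun a b c =>
    Finset.single_le_sum (fun b _ => h0 a b c) (Finset.mem_univ b)
  have hle_mB : ∀ a b c, m a b c ≤ mB b c := fun a b c =>
    Finset.single_le_sum (fun a _ => h0 a b c) (Finset.mem_univ a)
  set ν : A → B → C → ℝ := fun a b c => mA a c * mB b c / mC c with hν
  set μ' : A × B × C → ℝ := fun i => m i.1 i.2.1 i.2.2 with hμ'
  set ν' : A × B × C → ℝ := fun i => ν i.1 i.2.1 i.2.2 with hν'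
  have hμ'0 : ∀ i, 0 ≤ μ' i := fun i => h0 _ _ _
  have hν'0 : ∀ i, 0 ≤ ν' i := fun i =>
    div_nonneg (mul_nonneg (hmA0 _ _) (hmB0 _ _)) (hC _).le
  have hμ'1 : ∑ i, μ' i = 1 := by
    rw [hμ', sum3_eq (fun a b c => m a b c), sum_rot (fun a b c => m a b c), h1]
  have hν'1 : ∑ i, ν' i = 1 := by
    rw [hν', sum3_eq (fun a b c => ν a b c), sum_rot (fun a b c => ν a b c)]
    rw [← h1]
    apply Finset.sum_congr rfl; intro c _
    have hc : mC c ≠ 0 := (hC c).ne'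
    have e1 : ∑ b, mB b c = mC c := Finset.sum_comm
    simp_rw [hν, div_eq_mul_inv, ← Finset.sum_mul, ← Finset.mul_sum, e1]
    field_simp
    rw [← Finset.sum_mul]
    rw [sq]
  have habs : ∀ i, ν' i = 0 → μ' i = 0 := by
    rintro ⟨a, b, c⟩ h
    by_contra hne
    have hm : 0 < m a b c := lt_of_le_of_ne (h0 a b c) (Ne.symm hne)
    have hA : 0 < mA a c := lt_of_lt_of_le hm (hle_mA a b c)
    have hB : 0 < mB b c := lt_of_lt_of_le hm (hle_mB a b c)
    have hpos : 0 < ν a b c := by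
      rw [hν]; exact div_pos (mul_pos hA hB) (hC c)
    rw [hν'] at h; simp only at h; linarith
  have step : ∀ a b c, m a b c * Real.log (m a b c) - m a b c * Real.log (ν a b c)
      = m a b c * Real.log (m a b c) - m a b c * Real.log (mA a c)
         - m a b c * Real.log (mB b c) + m a b c * Real.log (mC c) := by
    intro a b c
    by_cases h : m a b c = 0
    · simp [h]
    have hm : 0 < m a b c := lt_of_le_of_ne (h0 a b c) (Ne.symm h)
    have hA : 0 < mA a c := lt_of_lt_of_le hm (hle_mA a b c)
    have hB : 0 < mB b c := lt_of_lt_of_le hm (hle_mB a b c)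
    have hCc := hC c
    rw [hν]; simp only
    rw [Real.log_div (mul_pos hA hB).ne' hCc.ne', Real.log_mul hA.ne' hB.ne']
    ring
  have eA : ∑ a, ∑ b, ∑ c, m a b c * Real.log (mA a c)
      = ∑ a, ∑ c, mA a c * Real.log (mA a c) := by
    apply Finset.sum_congr rfl; intro a _
    rw [Finset.sum_comm]
    apply Finset.sum_congr rfl; intro c _
    rw [← Finset.sum_mul]
  have eB : ∑ a, ∑ b, ∑ c, m a b c * Real.log (mB b c)
      = ∑ b, ∑ c, mB b c * Real.log (mB b c) := by
    rw [Finset.sum_comm]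
    apply Finset.sum_congr rfl; intro b _
    rw [Finset.sum_comm]
    apply Finset.sum_congr rfl; intro c _
    rw [← Finset.sum_mul]
  have eC : ∑ a, ∑ b, ∑ c, m a b c * Real.log (mC c)
      = ∑ c, mC c * Real.log (mC c) := by
    rw [sum_rot (fun a b c => m a b c * Real.log (mC c))]
    apply Finset.sum_congr rfl; intro c _
    simp_rw [← Finset.sum_mul]
    rfl
  have hKL : ∑ i, (μ' i * Real.log (μ' i) - μ' i * Real.log (ν' i)) = 0 := by
    rw [hμ', hν',
      sum3_eq (fun a b c => m a b c * Real.log (m a b c) - m a b c * Real.log (ν a b c))]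
    simp_rw [step]
    simp only [Finset.sum_sub_distrib, Finset.sum_add_distrib]
    rw [eA, eB, eC]
    simp only [Real.negMulLog, neg_mul, Finset.sum_neg_distrib] at hcmi
    linarith
  have heq := KL_zero μ' ν' hμ'0 hν'0 hμ'1 hν'1 habs hKL
  intro a b c
  have h := heq (a, b, c)
  rw [hμ', hν', hν] at h; simp only at h
  show m a b c * mC c = mA a c * mB b c
  rw [h, div_mul_cancel₀ _ (hC c).ne']

lemma factorize_of_conn {𝒳 𝒴 𝒬 : Type*} [Fintype 𝒳] [Fintype 𝒴] [Fintype 𝒬]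
    (m3 : 𝒬 → 𝒴 → 𝒳 → ℝ) (PXY : 𝒳 × 𝒴 → ℝ)
    (h0 : ∀ q y x, 0 ≤ m3 q y x)
    (hPXY : ∀ x y, PXY (x, y) = ∑ q, m3 q y x)
    (hPX : ∀ x, 0 < ∑ q, ∑ y, m3 q y x)
    (hPY : ∀ y, 0 < ∑ q, ∑ x, m3 q y x)
    (hne : Nonempty 𝒳)
    (hconn : ∀ a b : 𝒳 ⊕ 𝒴, Relation.EqvGen (edge PXY) a b)
    (hci1 : ∀ q y x, m3 q y x * (∑ q', ∑ y', m3 q' y' x)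
        = (∑ y', m3 q y' x) * (∑ q', m3 q' y x))
    (hci2 : ∀ q x y, m3 q y x * (∑ q', ∑ x', m3 q' y x')
        = (∑ x', m3 q y x') * (∑ q', m3 q' y x)) :
    ∃ c : 𝒬 → ℝ, ∀ q y x, m3 q y x = (∑ q', m3 q' y x) * c q := by
  classical
  set f : 𝒳 → 𝒬 → ℝ := fun x q => (∑ y, m3 q y x) / (∑ q', ∑ y', m3 q' y' x) with hf
  set g : 𝒴 → 𝒬 → ℝ := fun y q => (∑ x, m3 q y x) / (∑ q', ∑ x', m3 q' y x') with hg
  have hedge : ∀ a b, edge PXY a b → Sum.elim f g a = Sum.elim f g b := by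
    have main : ∀ x y, 0 < PXY (x, y) → f x = g y := by
      intro x y hpos
      funext q
      rw [hPXY] at hpos
      have A := hci1 q y x
      have B := hci2 q x y
      have hpx := hPX x
      have hpy := hPY y
      rw [hf, hg]; simp only
      rw [div_eq_div_iff hpx.ne' hpy.ne']
      have key : (∑ y', m3 q y' x) * (∑ q', ∑ x', m3 q' y x') * (∑ q', m3 q' y x)
          = (∑ x', m3 q y x') * (∑ q', ∑ y', m3 q' y' x) * (∑ q', m3 q' y x) := by
        linear_combination (∑ q', ∑ y', m3 q' y' x) * B - (∑ q', ∑ x', m3 q' y x') * A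
      exact mul_right_cancel₀ hpos.ne' key
    rintro (x | y) (x' | y') h
    · exact absurd h not_false
    · exact main x y' h
    · exact (main x' y h).symm
    · exact absurd h not_false
  have hconst : ∀ a b, Relation.EqvGen (edge PXY) a b →
      Sum.elim f g a = Sum.elim f g b := by
    intro a b hab
    induction hab with
    | rel a b hr => exact hedge a b hr
    | refl => rfl
    | symm _ _ _ ih => exact ih.symm
    | trans _ _ _ _ _ ih1 ih2 => exact ih1.trans ih2
  obtain ⟨x₀⟩ := hne
  refine ⟨f x₀, ?_⟩
  intro q y x
  have hfc : f x = f x₀ := by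
    have := hconst (Sum.inl x) (Sum.inl x₀) (hconn _ _); simpa using this
  by_cases h : (∑ q', m3 q' y x) = 0
  · have hle : m3 q y x ≤ ∑ q', m3 q' y x :=
      Finset.single_le_sum (fun q' _ => h0 q' y x) (Finset.mem_univ q)
    have := h0 q y x
    rw [h, zero_mul]; linarith
  · have hpxy : 0 < ∑ q', m3 q' y x :=
      lt_of_le_of_ne (Finset.sum_nonneg fun q' _ => h0 q' y x) (Ne.symm h)
    have A := hci1 q y x
    have hpx := hPX x
    rw [← hfc, hf]; simp only
    rw [mul_div_assoc', eq_div_iff hpx.ne']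
    linear_combination A

lemma sum3_eq'2 {A B C M : Type*} [Fintype A] [Fintype B] [Fintype C] [AddCommMonoid M]
    (F : A → B → C → M) :
    ∑ i : (A × B) × C, F i.1.1 i.1.2 i.2 = ∑ a, ∑ b, ∑ c, F a b c := by
  rw [Fintype.sum_prod_type]
  exact Fintype.sum_prod_type _

lemma sum_negMulLog_mul {A B : Type*} [Fintype A] [Fintype B] (f : A → ℝ) (g : B → ℝ)
    (hf : ∑ a, f a = 1) (hg : ∑ b, g b = 1) :
    ∑ i : A × B, Real.negMulLog (f i.1 * g i.2)
      = ∑ a, Real.negMulLog (f a) + ∑ b, Real.negMulLog (g b) := by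
  rw [Fintype.sum_prod_type]
  calc ∑ a, ∑ b, Real.negMulLog (f a * g b)
      = ∑ a, (Real.negMulLog (f a) + f a * ∑ b, Real.negMulLog (g b)) := by
        refine Finset.sum_congr rfl fun a _ => ?_
        simp_rw [Real.negMulLog_mul]
        rw [Finset.sum_add_distrib, ← Finset.sum_mul, hg, one_mul, ← Finset.mul_sum]
    _ = _ := by
        rw [Finset.sum_add_distrib, ← Finset.sum_mul, hf, one_mul]

theorem stmt4 {Ω 𝒳 𝒴 𝒬 : Type*} [Fintype Ω] [Fintype 𝒳] [Fintype 𝒴] [Fintype 𝒬]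
    (p : Ω → ℝ) (hp : IsPMF p) (X : Ω → 𝒳) (Y : Ω → 𝒴) (Q : Ω → 𝒬)
    (hX : ∀ x, 0 < prob p X x) (hY : ∀ y, 0 < prob p Y y)
    (hconn : ∀ a b : 𝒳 ⊕ 𝒴,
      Relation.EqvGen (edge (fun ab => prob p (fun ω => (X ω, Y ω)) ab)) a b)
    (h1 : cmi p Q Y X = 0) (h2 : cmi p Q X Y = 0) :
    mi p (fun ω => (X ω, Y ω)) Q = 0 ∧ cmi p X Y Q = mi p X Y := by
  classical
  obtain ⟨hp0, hp1⟩ := hp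
  have hm3def : True := trivial
  set m3 : 𝒬 → 𝒴 → 𝒳 → ℝ := fun q y x => prob p (fun ω => (Q ω, (Y ω, X ω))) (q, (y, x))
    with hm3
  have hm30 : ∀ q y x, 0 ≤ m3 q y x := fun q y x => prob_nonneg p hp0 _ _
  -- marginals
  have eQX : ∀ q x, prob p (fun ω => (Q ω, X ω)) (q, x) = ∑ y, m3 q y x := by
    intro q x
    rw [prob_fst p (fun ω => (Q ω, X ω)) Y (q, x)]
    exact Finset.sum_congr rfl fun y _ => prob_congr p fun ω => by
      simp [Prod.ext_iff]; tauto
  have eQY : ∀ q y, prob p (fun ω => (Q ω, Y ω)) (q, y) = ∑ x, m3 q y x := by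
    intro q y
    rw [prob_fst p (fun ω => (Q ω, Y ω)) X (q, y)]
    exact Finset.sum_congr rfl fun x _ => prob_congr p fun ω => by
      simp [Prod.ext_iff]; tauto
  have eYX : ∀ y x, prob p (fun ω => (Y ω, X ω)) (y, x) = ∑ q, m3 q y x := by
    intro y x
    rw [prob_snd p Q (fun ω => (Y ω, X ω)) (y, x)]
  have ePXY : ∀ x y, prob p (fun ω => (X ω, Y ω)) (x, y) = ∑ q, m3 q y x := by
    intro x y
    rw [← eYX]
    exact prob_congr p fun ω => by simp [Prod.ext_iff]; tauto
  have eX : ∀ x, prob p X x = ∑ q, ∑ y, m3 q y x := by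
    intro x
    rw [prob_snd p Y X x]
    simp_rw [eYX]
    exact Finset.sum_comm
  have eY : ∀ y, prob p Y y = ∑ q, ∑ x, m3 q y x := by
    intro y
    rw [prob_snd p X Y y]
    simp_rw [ePXY]
    exact Finset.sum_comm
  have eQ : ∀ q, prob p Q q = ∑ y, ∑ x, m3 q y x := by
    intro q
    rw [prob_fst p Q (fun ω => (Y ω, X ω)) q, Fintype.sum_prod_type]
  -- entropies in terms of m3
  have entQX : ent p (fun ω => (Q ω, X ω)) = ∑ q, ∑ x, Real.negMulLog (∑ y, m3 q y x) := by
    rw [ent, Fintype.sum_prod_type]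
    exact Finset.sum_congr rfl fun q _ => Finset.sum_congr rfl fun x _ => by rw [eQX]
  have entQY : ent p (fun ω => (Q ω, Y ω)) = ∑ q, ∑ y, Real.negMulLog (∑ x, m3 q y x) := by
    rw [ent, Fintype.sum_prod_type]
    exact Finset.sum_congr rfl fun q _ => Finset.sum_congr rfl fun y _ => by rw [eQY]
  have entYX : ent p (fun ω => (Y ω, X ω)) = ∑ y, ∑ x, Real.negMulLog (∑ q, m3 q y x) := by
    rw [ent, Fintype.sum_prod_type]
    exact Finset.sum_congr rfl fun y _ => Finset.sum_congr rfl fun x _ => by rw [eYX]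
  have entXY : ent p (fun ω => (X ω, Y ω)) = ∑ x, ∑ y, Real.negMulLog (∑ q, m3 q y x) := by
    rw [ent, Fintype.sum_prod_type]
    exact Finset.sum_congr rfl fun x _ => Finset.sum_congr rfl fun y _ => by rw [ePXY]
  have entX : ent p X = ∑ x, Real.negMulLog (∑ q, ∑ y, m3 q y x) := by
    rw [ent]
    exact Finset.sum_congr rfl fun x _ => by rw [eX]
  have entY : ent p Y = ∑ y, Real.negMulLog (∑ q, ∑ x, m3 q y x) := by
    rw [ent]
    exact Finset.sum_congr rfl fun y _ => by rw [eY]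
  have entQYX : ent p (fun ω => ((Q ω, Y ω), X ω))
      = ∑ q, ∑ y, ∑ x, Real.negMulLog (m3 q y x) := by
    rw [ent, ← sum3_eq'2 (fun q y x => Real.negMulLog (m3 q y x))]
    refine Finset.sum_congr rfl fun i _ => ?_
    rcases i with ⟨⟨q, y⟩, x⟩
    simp only
    congr 1
    exact prob_congr p fun ω => by simp [Prod.ext_iff]; tauto
  have entQXY : ent p (fun ω => ((Q ω, X ω), Y ω))
      = ∑ q, ∑ x, ∑ y, Real.negMulLog (m3 q y x) := by
    rw [ent, ← sum3_eq'2 (fun q x y => Real.negMulLog (m3 q y x))]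
    refine Finset.sum_congr rfl fun i _ => ?_
    rcases i with ⟨⟨q, x⟩, y⟩
    simp only
    congr 1
    exact prob_congr p fun ω => by simp [Prod.ext_iff]; tauto
  -- totals and positivity
  have h1tot : ∑ x, ∑ q, ∑ y, m3 q y x = 1 := by
    rw [← sum_prob p hp1 X]
    exact Finset.sum_congr rfl fun x _ => (eX x).symm
  have h2tot : ∑ y, ∑ q, ∑ x, m3 q y x = 1 := by
    rw [← sum_prob p hp1 Y]
    exact Finset.sum_congr rfl fun y _ => (eY y).symm
  have hCX : ∀ x, 0 < ∑ q, ∑ y, m3 q y x := fun x => (eX x) ▸ hX x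
  have hCY : ∀ y, 0 < ∑ q, ∑ x, m3 q y x := fun y => (eY y) ▸ hY y
  -- first conditional independence
  have hci1 := ci_of_cmi_zero m3 hm30 h1tot hCX (by
    rw [cmi, entQX, entYX, entQYX, entX] at h1
    exact h1)
  -- second conditional independence
  have hci2 := ci_of_cmi_zero (fun q x y => m3 q y x) (fun q x y => hm30 q y x) h2tot hCY (by
    rw [cmi, entQY, entXY, entQXY, entY] at h2
    exact h2)
  -- connectivity: factorize
  have hne : Nonempty 𝒳 := by
    by_contra h
    rw [not_nonempty_iff] at h
    have : IsEmpty Ω := ⟨fun ω => h.false (X ω)⟩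
    rw [Finset.univ_eq_empty, Finset.sum_empty] at hp1
    exact one_ne_zero hp1.symm
  obtain ⟨c, hc⟩ := factorize_of_conn m3 (fun ab => prob p (fun ω => (X ω, Y ω)) ab)
    hm30 (fun x y => ePXY x y) hCX hCY hne hconn hci1 hci2
  -- identify c with prob Q
  have hPXYtot : ∑ y, ∑ x, (∑ q', m3 q' y x) = 1 := by
    rw [← h1tot]
    exact (sum_rot (fun x q y => m3 q y x)).symm
  have hcQ : ∀ q, prob p Q q = c q := by
    intro q
    have e : ∑ y, ∑ x, m3 q y x = ∑ y, ∑ x, (∑ q', m3 q' y x) * c q :=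
      Finset.sum_congr rfl fun y _ => Finset.sum_congr rfl fun x _ => hc q y x
    rw [eQ, e]
    simp_rw [← Finset.sum_mul]
    rw [hPXYtot, one_mul]
  -- independence equations
  have eXYQ : ∀ x y q, prob p (fun ω => ((X ω, Y ω), Q ω)) ((x, y), q)
      = prob p (fun ω => (X ω, Y ω)) (x, y) * prob p Q q := by
    intro x y q
    have h : prob p (fun ω => ((X ω, Y ω), Q ω)) ((x, y), q) = m3 q y x :=
      prob_congr p fun ω => by simp [Prod.ext_iff]; tauto
    rw [h, hc, ePXY, hcQ]
  have eXQ : ∀ x q, prob p (fun ω => (X ω, Q ω)) (x, q) = prob p X x * prob p Q q := by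
    intro x q
    rw [prob_fst p (fun ω => (X ω, Q ω)) Y (x, q)]
    have h : ∀ y, prob p (fun ω => ((X ω, Q ω), Y ω)) ((x, q), y) = m3 q y x := fun y =>
      prob_congr p fun ω => by simp [Prod.ext_iff]; tauto
    have e : ∑ y, prob p (fun ω => ((X ω, Q ω), Y ω)) ((x, q), y)
        = ∑ y, (∑ q', m3 q' y x) * c q :=
      Finset.sum_congr rfl fun y _ => (h y).trans (hc q y x)
    rw [e, ← Finset.sum_mul, hcQ]
    congr 1
    rw [prob_fst p X Y x]
    exact Finset.sum_congr rfl fun y _ => (ePXY x y).symm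
  have eYQ : ∀ y q, prob p (fun ω => (Y ω, Q ω)) (y, q) = prob p Y y * prob p Q q := by
    intro y q
    rw [prob_fst p (fun ω => (Y ω, Q ω)) X (y, q)]
    have h : ∀ x, prob p (fun ω => ((Y ω, Q ω), X ω)) ((y, q), x) = m3 q y x := fun x =>
      prob_congr p fun ω => by simp [Prod.ext_iff]; tauto
    have e : ∑ x, prob p (fun ω => ((Y ω, Q ω), X ω)) ((y, q), x)
        = ∑ x, (∑ q', m3 q' y x) * c q :=
      Finset.sum_congr rfl fun x _ => (h x).trans (hc q y x)
    rw [e, ← Finset.sum_mul, hcQ]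
    congr 1
    rw [prob_snd p X Y y]
    exact Finset.sum_congr rfl fun x _ => (ePXY x y).symm
  -- entropy factorizations
  have entXYQ : ent p (fun ω => ((X ω, Y ω), Q ω))
      = ent p (fun ω => (X ω, Y ω)) + ent p Q := by
    rw [ent]
    calc ∑ i : (𝒳 × 𝒴) × 𝒬, Real.negMulLog (prob p (fun ω => ((X ω, Y ω), Q ω)) i)
        = ∑ i : (𝒳 × 𝒴) × 𝒬,
            Real.negMulLog (prob p (fun ω => (X ω, Y ω)) i.1 * prob p Q i.2) := by
          refine Finset.sum_congr rfl fun i _ => ?_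
          rcases i with ⟨⟨x, y⟩, q⟩
          rw [eXYQ]
      _ = _ := sum_negMulLog_mul _ _ (sum_prob p hp1 _) (sum_prob p hp1 Q)
  have entXQ : ent p (fun ω => (X ω, Q ω)) = ent p X + ent p Q := by
    rw [ent]
    calc ∑ i : 𝒳 × 𝒬, Real.negMulLog (prob p (fun ω => (X ω, Q ω)) i)
        = ∑ i : 𝒳 × 𝒬, Real.negMulLog (prob p X i.1 * prob p Q i.2) := by
          refine Finset.sum_congr rfl fun i _ => ?_
          rcases i with ⟨x, q⟩
          rw [eXQ]
      _ = _ := sum_negMulLog_mul _ _ (sum_prob p hp1 _) (sum_prob p hp1 Q)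
  have entYQ : ent p (fun ω => (Y ω, Q ω)) = ent p Y + ent p Q := by
    rw [ent]
    calc ∑ i : 𝒴 × 𝒬, Real.negMulLog (prob p (fun ω => (Y ω, Q ω)) i)
        = ∑ i : 𝒴 × 𝒬, Real.negMulLog (prob p Y i.1 * prob p Q i.2) := by
          refine Finset.sum_congr rfl fun i _ => ?_
          rcases i with ⟨y, q⟩
          rw [eYQ]
      _ = _ := sum_negMulLog_mul _ _ (sum_prob p hp1 _) (sum_prob p hp1 Q)
  constructor
  · rw [mi, entXYQ]; ring
  · rw [cmi, mi, entXYQ, entXQ, entYQ]; ring
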